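/- (Closed-form identity for the fourth-moment U-statistic.) Let n ≥ 4 and let Y_1, …, Y_n be real numbers. Write S_l = ∑_{i=1}^n Y_i^l for l = 1, 2, 3, 4. Then (1/4) ∑ (Y_i − Y_{i'})² (Y_h − Y_{h'})², where the sum ranges over all ordered quadruples (i, i', h, h') of mutually distinct indices in {1, …, n}, equals (n−1)(4 S_3 S_1 − n S_4 − 3 S_2²) + (n S_2 − S_1²)². Equivalently, the estimator ω̂ := [(1/4)/(n(n−1)(n−2)(n−3))] ∑_{distinct i,i',h,h'} (Y_i − Y_{i'})²(Y_h − Y_{h'})² equals [ (n−1)(4 S_3 S_1 − n S_4 − 3 S_2²) + (n S_2 − S_1²)² ] / ( n(n−1)(n−2)(n−3) ). -/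
import Mathlib


open Finset

/-- The sum of `(Y i - Y i')² (Y h - Y h')²` over all ordered quadruples of
pairwise distinct indices in `{1, …, n}`. -/
def quadSum (n : ℕ) (Y : ℕ → ℝ) : ℝ :=
  ∑ i ∈ Finset.Icc 1 n, ∑ i' ∈ Finset.Icc 1 n, ∑ h ∈ Finset.Icc 1 n, ∑ h' ∈ Finset.Icc 1 n,
    if i ≠ i' ∧ i ≠ h ∧ i ≠ h' ∧ i' ≠ h ∧ i' ≠ h' ∧ h ≠ h' then
      (Y i - Y i') ^ 2 * (Y h - Y h') ^ 2
    else 0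

/-- Power sums `S_l = ∑_{i=1}^n Y_i^l`. -/
def powSum (n : ℕ) (Y : ℕ → ℝ) (l : ℕ) : ℝ := ∑ i ∈ Finset.Icc 1 n, Y i ^ l

section Aux

/-- Pointwise inclusion–exclusion identity for the distinctness indicator. -/
lemma quad_pointwise (Y : ℕ → ℝ) (a b c d : ℕ) :
    (if a ≠ b ∧ a ≠ c ∧ a ≠ d ∧ b ≠ c ∧ b ≠ d ∧ c ≠ d then
        (Y a - Y b) ^ 2 * (Y c - Y d) ^ 2 else 0)
    = (Y a - Y b) ^ 2 * (Y c - Y d) ^ 2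
      - (if a = c then (Y a - Y b) ^ 2 * (Y c - Y d) ^ 2 else 0)
      - (if a = d then (Y a - Y b) ^ 2 * (Y c - Y d) ^ 2 else 0)
      - (if b = c then (Y a - Y b) ^ 2 * (Y c - Y d) ^ 2 else 0)
      - (if b = d then (Y a - Y b) ^ 2 * (Y c - Y d) ^ 2 else 0)
      + (if a = c ∧ b = d then (Y a - Y b) ^ 2 * (Y c - Y d) ^ 2 else 0)
      + (if a = d ∧ b = c then (Y a - Y b) ^ 2 * (Y c - Y d) ^ 2 else 0) := by
  by_cases h1 : a = c <;> by_cases h2 : a = d <;> by_cases h3 : b = c <;>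
    by_cases h4 : b = d <;> by_cases h5 : a = b <;> by_cases h6 : c = d <;>
    simp_all <;> try ring

lemma Q_eval (n : ℕ) (Y : ℕ → ℝ) (a : ℕ) :
    ∑ b ∈ Finset.Icc 1 n, (Y a - Y b) ^ 2
      = (n : ℝ) * Y a ^ 2 - 2 * Y a * powSum n Y 1 + powSum n Y 2 := by
  have h : ∀ b ∈ Finset.Icc 1 n, (Y a - Y b) ^ 2
      = Y a ^ 2 - 2 * Y a * Y b ^ 1 + Y b ^ 2 := by intros; ring
  rw [Finset.sum_congr rfl h]
  simp only [Finset.sum_add_distrib, Finset.sum_sub_distrib, ← Finset.mul_sum,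
    Finset.sum_const, nsmul_eq_mul, Nat.card_Icc, Nat.add_sub_cancel, powSum]

lemma Q'_eval (n : ℕ) (Y : ℕ → ℝ) (a : ℕ) :
    ∑ b ∈ Finset.Icc 1 n, (Y b - Y a) ^ 2
      = (n : ℝ) * Y a ^ 2 - 2 * Y a * powSum n Y 1 + powSum n Y 2 := by
  rw [show ∑ b ∈ Finset.Icc 1 n, (Y b - Y a) ^ 2 = ∑ b ∈ Finset.Icc 1 n, (Y a - Y b) ^ 2 from
    Finset.sum_congr rfl fun b _ => by ring]
  exact Q_eval n Y a

lemma U_eval (n : ℕ) (Y : ℕ → ℝ) :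
    ∑ a ∈ Finset.Icc 1 n, ((n : ℝ) * Y a ^ 2 - 2 * Y a * powSum n Y 1 + powSum n Y 2) ^ 2
      = (n : ℝ) ^ 2 * powSum n Y 4 + 3 * n * (powSum n Y 2) ^ 2
        - 4 * n * powSum n Y 1 * powSum n Y 3 := by
  have h : ∀ a ∈ Finset.Icc 1 n,
      ((n : ℝ) * Y a ^ 2 - 2 * Y a * powSum n Y 1 + powSum n Y 2) ^ 2
      = (n : ℝ) ^ 2 * Y a ^ 4 - 4 * n * powSum n Y 1 * Y a ^ 3
        + (4 * (powSum n Y 1) ^ 2 + 2 * n * powSum n Y 2) * Y a ^ 2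
        - 4 * powSum n Y 1 * powSum n Y 2 * Y a ^ 1 + (powSum n Y 2) ^ 2 := by
    intros; ring
  rw [Finset.sum_congr rfl h]
  simp only [Finset.sum_add_distrib, Finset.sum_sub_distrib, ← Finset.mul_sum,
    Finset.sum_const, nsmul_eq_mul, Nat.card_Icc, Nat.add_sub_cancel]
  rw [show (∑ i ∈ Finset.Icc 1 n, Y i ^ 4) = powSum n Y 4 from rfl,
      show (∑ i ∈ Finset.Icc 1 n, Y i ^ 3) = powSum n Y 3 from rfl,
      show (∑ i ∈ Finset.Icc 1 n, Y i ^ 2) = powSum n Y 2 from rfl,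
      show (∑ i ∈ Finset.Icc 1 n, Y i ^ 1) = powSum n Y 1 from rfl]
  ring

lemma R_eval (n : ℕ) (Y : ℕ → ℝ) :
    ∑ a ∈ Finset.Icc 1 n, ∑ b ∈ Finset.Icc 1 n, (Y a - Y b) ^ 4
      = 2 * n * powSum n Y 4 - 8 * powSum n Y 3 * powSum n Y 1 + 6 * (powSum n Y 2) ^ 2 := by
  have h : ∀ a ∈ Finset.Icc 1 n, ∑ b ∈ Finset.Icc 1 n, (Y a - Y b) ^ 4
      = (n : ℝ) * Y a ^ 4 - 4 * powSum n Y 1 * Y a ^ 3 + 6 * powSum n Y 2 * Y a ^ 2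
        - 4 * powSum n Y 3 * Y a ^ 1 + powSum n Y 4 := by
    intro a _
    have h2 : ∀ b ∈ Finset.Icc 1 n, (Y a - Y b) ^ 4
        = Y a ^ 4 - 4 * Y a ^ 3 * Y b ^ 1 + 6 * Y a ^ 2 * Y b ^ 2 - 4 * Y a * Y b ^ 3
          + Y b ^ 4 := by intros; ring
    rw [Finset.sum_congr rfl h2]
    simp only [Finset.sum_add_distrib, Finset.sum_sub_distrib, ← Finset.mul_sum,
      Finset.sum_const, nsmul_eq_mul, Nat.card_Icc, Nat.add_sub_cancel]
    rw [show (∑ i ∈ Finset.Icc 1 n, Y i ^ 4) = powSum n Y 4 from rfl,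
        show (∑ i ∈ Finset.Icc 1 n, Y i ^ 3) = powSum n Y 3 from rfl,
        show (∑ i ∈ Finset.Icc 1 n, Y i ^ 2) = powSum n Y 2 from rfl,
        show (∑ i ∈ Finset.Icc 1 n, Y i ^ 1) = powSum n Y 1 from rfl]
    ring
  rw [Finset.sum_congr rfl h]
  simp only [Finset.sum_add_distrib, Finset.sum_sub_distrib, ← Finset.mul_sum,
    Finset.sum_const, nsmul_eq_mul, Nat.card_Icc, Nat.add_sub_cancel]
  rw [show (∑ i ∈ Finset.Icc 1 n, Y i ^ 4) = powSum n Y 4 from rfl,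
      show (∑ i ∈ Finset.Icc 1 n, Y i ^ 3) = powSum n Y 3 from rfl,
      show (∑ i ∈ Finset.Icc 1 n, Y i ^ 2) = powSum n Y 2 from rfl,
      show (∑ i ∈ Finset.Icc 1 n, Y i ^ 1) = powSum n Y 1 from rfl]
  ring

lemma P_eval (n : ℕ) (Y : ℕ → ℝ) :
    ∑ a ∈ Finset.Icc 1 n, ∑ b ∈ Finset.Icc 1 n, (Y a - Y b) ^ 2
      = 2 * n * powSum n Y 2 - 2 * (powSum n Y 1) ^ 2 := by
  rw [Finset.sum_congr rfl fun a _ => Q_eval n Y a]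
  rw [Finset.sum_congr rfl (fun a (_ : a ∈ Finset.Icc 1 n) => show
    (n : ℝ) * Y a ^ 2 - 2 * Y a * powSum n Y 1 + powSum n Y 2
      = (n : ℝ) * Y a ^ 2 - 2 * powSum n Y 1 * Y a ^ 1 + powSum n Y 2 by ring)]
  simp only [Finset.sum_add_distrib, Finset.sum_sub_distrib, ← Finset.mul_sum,
    Finset.sum_const, nsmul_eq_mul, Nat.card_Icc, Nat.add_sub_cancel]
  rw [show (∑ i ∈ Finset.Icc 1 n, Y i ^ 2) = powSum n Y 2 from rfl,
      show (∑ i ∈ Finset.Icc 1 n, Y i ^ 1) = powSum n Y 1 from rfl]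
  ring

-- T0
lemma T0_eval (n : ℕ) (Y : ℕ → ℝ) :
    (∑ a ∈ Finset.Icc 1 n, ∑ b ∈ Finset.Icc 1 n, ∑ c ∈ Finset.Icc 1 n,
      ∑ d ∈ Finset.Icc 1 n, (Y a - Y b) ^ 2 * (Y c - Y d) ^ 2)
    = (2 * n * powSum n Y 2 - 2 * (powSum n Y 1) ^ 2) ^ 2 := by
  have : (∑ a ∈ Finset.Icc 1 n, ∑ b ∈ Finset.Icc 1 n, ∑ c ∈ Finset.Icc 1 n,
      ∑ d ∈ Finset.Icc 1 n, (Y a - Y b) ^ 2 * (Y c - Y d) ^ 2)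
      = (∑ a ∈ Finset.Icc 1 n, ∑ b ∈ Finset.Icc 1 n, (Y a - Y b) ^ 2)
        * (∑ c ∈ Finset.Icc 1 n, ∑ d ∈ Finset.Icc 1 n, (Y c - Y d) ^ 2) := by
    simp only [← Finset.mul_sum, ← Finset.sum_mul]
  rw [this, P_eval]; ring

-- T1 : a = c
lemma T1_eval (n : ℕ) (Y : ℕ → ℝ) :
    (∑ a ∈ Finset.Icc 1 n, ∑ b ∈ Finset.Icc 1 n, ∑ c ∈ Finset.Icc 1 n,
      ∑ d ∈ Finset.Icc 1 n,
        if a = c then (Y a - Y b) ^ 2 * (Y c - Y d) ^ 2 else 0)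
    = (n : ℝ) ^ 2 * powSum n Y 4 + 3 * n * (powSum n Y 2) ^ 2
        - 4 * n * powSum n Y 1 * powSum n Y 3 := by
  have step : (∑ a ∈ Finset.Icc 1 n, ∑ b ∈ Finset.Icc 1 n, ∑ c ∈ Finset.Icc 1 n,
      ∑ d ∈ Finset.Icc 1 n,
        if a = c then (Y a - Y b) ^ 2 * (Y c - Y d) ^ 2 else 0)
      = ∑ a ∈ Finset.Icc 1 n, (∑ b ∈ Finset.Icc 1 n, (Y a - Y b) ^ 2)
          * (∑ d ∈ Finset.Icc 1 n, (Y a - Y d) ^ 2) := by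
    refine Finset.sum_congr rfl fun a ha => ?_
    have h1 : ∀ b ∈ Finset.Icc 1 n,
        (∑ c ∈ Finset.Icc 1 n, ∑ d ∈ Finset.Icc 1 n,
          if a = c then (Y a - Y b) ^ 2 * (Y c - Y d) ^ 2 else 0)
        = (Y a - Y b) ^ 2 * ∑ d ∈ Finset.Icc 1 n, (Y a - Y d) ^ 2 := by
      intro b _
      have h2 : ∀ c ∈ Finset.Icc 1 n,
          (∑ d ∈ Finset.Icc 1 n, if a = c then (Y a - Y b) ^ 2 * (Y c - Y d) ^ 2 else 0)
          = if a = c then ∑ d ∈ Finset.Icc 1 n, (Y a - Y b) ^ 2 * (Y c - Y d) ^ 2 else 0 := by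
        intro c _; split_ifs <;> simp
      rw [Finset.sum_congr rfl h2, Finset.sum_ite_eq (Finset.Icc 1 n) a _, if_pos ha,
        Finset.mul_sum]
    rw [Finset.sum_congr rfl h1, ← Finset.sum_mul]
  rw [step, Finset.sum_congr rfl fun a _ => by rw [Q_eval n Y a, ← sq]]
  exact U_eval n Y

-- T2 : a = d
lemma T2_eval (n : ℕ) (Y : ℕ → ℝ) :
    (∑ a ∈ Finset.Icc 1 n, ∑ b ∈ Finset.Icc 1 n, ∑ c ∈ Finset.Icc 1 n,
      ∑ d ∈ Finset.Icc 1 n,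
        if a = d then (Y a - Y b) ^ 2 * (Y c - Y d) ^ 2 else 0)
    = (n : ℝ) ^ 2 * powSum n Y 4 + 3 * n * (powSum n Y 2) ^ 2
        - 4 * n * powSum n Y 1 * powSum n Y 3 := by
  have step : (∑ a ∈ Finset.Icc 1 n, ∑ b ∈ Finset.Icc 1 n, ∑ c ∈ Finset.Icc 1 n,
      ∑ d ∈ Finset.Icc 1 n,
        if a = d then (Y a - Y b) ^ 2 * (Y c - Y d) ^ 2 else 0)
      = ∑ a ∈ Finset.Icc 1 n, (∑ b ∈ Finset.Icc 1 n, (Y a - Y b) ^ 2)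
          * (∑ c ∈ Finset.Icc 1 n, (Y c - Y a) ^ 2) := by
    refine Finset.sum_congr rfl fun a ha => ?_
    have h1 : ∀ b ∈ Finset.Icc 1 n,
        (∑ c ∈ Finset.Icc 1 n, ∑ d ∈ Finset.Icc 1 n,
          if a = d then (Y a - Y b) ^ 2 * (Y c - Y d) ^ 2 else 0)
        = (Y a - Y b) ^ 2 * ∑ c ∈ Finset.Icc 1 n, (Y c - Y a) ^ 2 := by
      intro b _
      have h2 : ∀ c ∈ Finset.Icc 1 n,
          (∑ d ∈ Finset.Icc 1 n, if a = d then (Y a - Y b) ^ 2 * (Y c - Y d) ^ 2 else 0)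
          = (Y a - Y b) ^ 2 * (Y c - Y a) ^ 2 := by
        intro c _
        rw [Finset.sum_ite_eq (Finset.Icc 1 n) a
          (fun d => (Y a - Y b) ^ 2 * (Y c - Y d) ^ 2), if_pos ha]
      rw [Finset.sum_congr rfl h2, ← Finset.mul_sum]
    rw [Finset.sum_congr rfl h1, ← Finset.sum_mul]
  rw [step, Finset.sum_congr rfl fun a _ => by rw [Q_eval n Y a, Q'_eval n Y a, ← sq]]
  exact U_eval n Y

-- T3 : b = c
lemma T3_eval (n : ℕ) (Y : ℕ → ℝ) :
    (∑ a ∈ Finset.Icc 1 n, ∑ b ∈ Finset.Icc 1 n, ∑ c ∈ Finset.Icc 1 n,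
      ∑ d ∈ Finset.Icc 1 n,
        if b = c then (Y a - Y b) ^ 2 * (Y c - Y d) ^ 2 else 0)
    = (n : ℝ) ^ 2 * powSum n Y 4 + 3 * n * (powSum n Y 2) ^ 2
        - 4 * n * powSum n Y 1 * powSum n Y 3 := by
  have step : (∑ a ∈ Finset.Icc 1 n, ∑ b ∈ Finset.Icc 1 n, ∑ c ∈ Finset.Icc 1 n,
      ∑ d ∈ Finset.Icc 1 n,
        if b = c then (Y a - Y b) ^ 2 * (Y c - Y d) ^ 2 else 0)
      = ∑ a ∈ Finset.Icc 1 n, ∑ b ∈ Finset.Icc 1 n,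
          (Y a - Y b) ^ 2 * ∑ d ∈ Finset.Icc 1 n, (Y b - Y d) ^ 2 := by
    refine Finset.sum_congr rfl fun a _ => Finset.sum_congr rfl fun b hb => ?_
    have h2 : ∀ c ∈ Finset.Icc 1 n,
        (∑ d ∈ Finset.Icc 1 n, if b = c then (Y a - Y b) ^ 2 * (Y c - Y d) ^ 2 else 0)
        = if b = c then ∑ d ∈ Finset.Icc 1 n, (Y a - Y b) ^ 2 * (Y c - Y d) ^ 2 else 0 := by
      intro c _; split_ifs <;> simp
    rw [Finset.sum_congr rfl h2, Finset.sum_ite_eq (Finset.Icc 1 n) b _, if_pos hb,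
      Finset.mul_sum]
  rw [step, Finset.sum_comm]
  have h3 : ∀ b ∈ Finset.Icc 1 n,
      (∑ a ∈ Finset.Icc 1 n, (Y a - Y b) ^ 2 * ∑ d ∈ Finset.Icc 1 n, (Y b - Y d) ^ 2)
      = ((n : ℝ) * Y b ^ 2 - 2 * Y b * powSum n Y 1 + powSum n Y 2) ^ 2 := by
    intro b _
    rw [← Finset.sum_mul, Q'_eval n Y b, Q_eval n Y b, ← sq]
  rw [Finset.sum_congr rfl h3]
  exact U_eval n Y

-- T4 : b = d
lemma T4_eval (n : ℕ) (Y : ℕ → ℝ) :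
    (∑ a ∈ Finset.Icc 1 n, ∑ b ∈ Finset.Icc 1 n, ∑ c ∈ Finset.Icc 1 n,
      ∑ d ∈ Finset.Icc 1 n,
        if b = d then (Y a - Y b) ^ 2 * (Y c - Y d) ^ 2 else 0)
    = (n : ℝ) ^ 2 * powSum n Y 4 + 3 * n * (powSum n Y 2) ^ 2
        - 4 * n * powSum n Y 1 * powSum n Y 3 := by
  have step : (∑ a ∈ Finset.Icc 1 n, ∑ b ∈ Finset.Icc 1 n, ∑ c ∈ Finset.Icc 1 n,
      ∑ d ∈ Finset.Icc 1 n,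
        if b = d then (Y a - Y b) ^ 2 * (Y c - Y d) ^ 2 else 0)
      = ∑ a ∈ Finset.Icc 1 n, ∑ b ∈ Finset.Icc 1 n,
          (Y a - Y b) ^ 2 * ∑ c ∈ Finset.Icc 1 n, (Y c - Y b) ^ 2 := by
    refine Finset.sum_congr rfl fun a _ => Finset.sum_congr rfl fun b hb => ?_
    have h2 : ∀ c ∈ Finset.Icc 1 n,
        (∑ d ∈ Finset.Icc 1 n, if b = d then (Y a - Y b) ^ 2 * (Y c - Y d) ^ 2 else 0)
        = (Y a - Y b) ^ 2 * (Y c - Y b) ^ 2 := by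
      intro c _
      rw [Finset.sum_ite_eq (Finset.Icc 1 n) b
        (fun d => (Y a - Y b) ^ 2 * (Y c - Y d) ^ 2), if_pos hb]
    rw [Finset.sum_congr rfl h2, ← Finset.mul_sum]
  rw [step, Finset.sum_comm]
  have h3 : ∀ b ∈ Finset.Icc 1 n,
      (∑ a ∈ Finset.Icc 1 n, (Y a - Y b) ^ 2 * ∑ c ∈ Finset.Icc 1 n, (Y c - Y b) ^ 2)
      = ((n : ℝ) * Y b ^ 2 - 2 * Y b * powSum n Y 1 + powSum n Y 2) ^ 2 := by
    intro b _
    rw [← Finset.sum_mul, Q'_eval n Y b]; ring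
  rw [Finset.sum_congr rfl h3]
  exact U_eval n Y

-- T5 : a = c ∧ b = d
lemma T5_eval (n : ℕ) (Y : ℕ → ℝ) :
    (∑ a ∈ Finset.Icc 1 n, ∑ b ∈ Finset.Icc 1 n, ∑ c ∈ Finset.Icc 1 n,
      ∑ d ∈ Finset.Icc 1 n,
        if a = c ∧ b = d then (Y a - Y b) ^ 2 * (Y c - Y d) ^ 2 else 0)
    = 2 * n * powSum n Y 4 - 8 * powSum n Y 3 * powSum n Y 1 + 6 * (powSum n Y 2) ^ 2 := by
  have step : (∑ a ∈ Finset.Icc 1 n, ∑ b ∈ Finset.Icc 1 n, ∑ c ∈ Finset.Icc 1 n,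
      ∑ d ∈ Finset.Icc 1 n,
        if a = c ∧ b = d then (Y a - Y b) ^ 2 * (Y c - Y d) ^ 2 else 0)
      = ∑ a ∈ Finset.Icc 1 n, ∑ b ∈ Finset.Icc 1 n, (Y a - Y b) ^ 4 := by
    refine Finset.sum_congr rfl fun a ha => Finset.sum_congr rfl fun b hb => ?_
    have h2 : ∀ c ∈ Finset.Icc 1 n,
        (∑ d ∈ Finset.Icc 1 n, if a = c ∧ b = d then (Y a - Y b) ^ 2 * (Y c - Y d) ^ 2 else 0)
        = if a = c then (Y a - Y b) ^ 2 * (Y c - Y b) ^ 2 else 0 := by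
      intro c _
      have h4 : ∀ d ∈ Finset.Icc 1 n,
          (if a = c ∧ b = d then (Y a - Y b) ^ 2 * (Y c - Y d) ^ 2 else 0)
          = if b = d then (if a = c then (Y a - Y b) ^ 2 * (Y c - Y d) ^ 2 else 0) else 0 := by
        intro d _; split_ifs <;> simp_all
      rw [Finset.sum_congr rfl h4, Finset.sum_ite_eq (Finset.Icc 1 n) b _, if_pos hb]
    rw [Finset.sum_congr rfl h2, Finset.sum_ite_eq (Finset.Icc 1 n) a _, if_pos ha]
    ring
  rw [step]; exact R_eval n Y

-- T6 : a = d ∧ b = c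
lemma T6_eval (n : ℕ) (Y : ℕ → ℝ) :
    (∑ a ∈ Finset.Icc 1 n, ∑ b ∈ Finset.Icc 1 n, ∑ c ∈ Finset.Icc 1 n,
      ∑ d ∈ Finset.Icc 1 n,
        if a = d ∧ b = c then (Y a - Y b) ^ 2 * (Y c - Y d) ^ 2 else 0)
    = 2 * n * powSum n Y 4 - 8 * powSum n Y 3 * powSum n Y 1 + 6 * (powSum n Y 2) ^ 2 := by
  have step : (∑ a ∈ Finset.Icc 1 n, ∑ b ∈ Finset.Icc 1 n, ∑ c ∈ Finset.Icc 1 n,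
      ∑ d ∈ Finset.Icc 1 n,
        if a = d ∧ b = c then (Y a - Y b) ^ 2 * (Y c - Y d) ^ 2 else 0)
      = ∑ a ∈ Finset.Icc 1 n, ∑ b ∈ Finset.Icc 1 n, (Y a - Y b) ^ 4 := by
    refine Finset.sum_congr rfl fun a ha => Finset.sum_congr rfl fun b hb => ?_
    have h2 : ∀ c ∈ Finset.Icc 1 n,
        (∑ d ∈ Finset.Icc 1 n, if a = d ∧ b = c then (Y a - Y b) ^ 2 * (Y c - Y d) ^ 2 else 0)
        = if b = c then (Y a - Y b) ^ 2 * (Y c - Y a) ^ 2 else 0 := by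
      intro c _
      have h4 : ∀ d ∈ Finset.Icc 1 n,
          (if a = d ∧ b = c then (Y a - Y b) ^ 2 * (Y c - Y d) ^ 2 else 0)
          = if a = d then (if b = c then (Y a - Y b) ^ 2 * (Y c - Y d) ^ 2 else 0) else 0 := by
        intro d _; split_ifs <;> simp_all
      rw [Finset.sum_congr rfl h4, Finset.sum_ite_eq (Finset.Icc 1 n) a _, if_pos ha]
    rw [Finset.sum_congr rfl h2, Finset.sum_ite_eq (Finset.Icc 1 n) b _, if_pos hb]
    ring
  rw [step]; exact R_eval n Y

lemma quadSum_eval (n : ℕ) (Y : ℕ → ℝ) :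
    quadSum n Y
      = (2 * n * powSum n Y 2 - 2 * (powSum n Y 1) ^ 2) ^ 2
        - 4 * ((n : ℝ) ^ 2 * powSum n Y 4 + 3 * n * (powSum n Y 2) ^ 2
            - 4 * n * powSum n Y 1 * powSum n Y 3)
        + 2 * (2 * n * powSum n Y 4 - 8 * powSum n Y 3 * powSum n Y 1
            + 6 * (powSum n Y 2) ^ 2) := by
  have split : quadSum n Y
      = (∑ a ∈ Finset.Icc 1 n, ∑ b ∈ Finset.Icc 1 n, ∑ c ∈ Finset.Icc 1 n,
          ∑ d ∈ Finset.Icc 1 n, (Y a - Y b) ^ 2 * (Y c - Y d) ^ 2)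
        - (∑ a ∈ Finset.Icc 1 n, ∑ b ∈ Finset.Icc 1 n, ∑ c ∈ Finset.Icc 1 n,
          ∑ d ∈ Finset.Icc 1 n, if a = c then (Y a - Y b) ^ 2 * (Y c - Y d) ^ 2 else 0)
        - (∑ a ∈ Finset.Icc 1 n, ∑ b ∈ Finset.Icc 1 n, ∑ c ∈ Finset.Icc 1 n,
          ∑ d ∈ Finset.Icc 1 n, if a = d then (Y a - Y b) ^ 2 * (Y c - Y d) ^ 2 else 0)
        - (∑ a ∈ Finset.Icc 1 n, ∑ b ∈ Finset.Icc 1 n, ∑ c ∈ Finset.Icc 1 n,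
          ∑ d ∈ Finset.Icc 1 n, if b = c then (Y a - Y b) ^ 2 * (Y c - Y d) ^ 2 else 0)
        - (∑ a ∈ Finset.Icc 1 n, ∑ b ∈ Finset.Icc 1 n, ∑ c ∈ Finset.Icc 1 n,
          ∑ d ∈ Finset.Icc 1 n, if b = d then (Y a - Y b) ^ 2 * (Y c - Y d) ^ 2 else 0)
        + (∑ a ∈ Finset.Icc 1 n, ∑ b ∈ Finset.Icc 1 n, ∑ c ∈ Finset.Icc 1 n,
          ∑ d ∈ Finset.Icc 1 n, if a = c ∧ b = d then (Y a - Y b) ^ 2 * (Y c - Y d) ^ 2 else 0)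
        + (∑ a ∈ Finset.Icc 1 n, ∑ b ∈ Finset.Icc 1 n, ∑ c ∈ Finset.Icc 1 n,
          ∑ d ∈ Finset.Icc 1 n, if a = d ∧ b = c then (Y a - Y b) ^ 2 * (Y c - Y d) ^ 2 else 0) := by
    unfold quadSum
    rw [Finset.sum_congr rfl fun a _ => Finset.sum_congr rfl fun b _ =>
      Finset.sum_congr rfl fun c _ => Finset.sum_congr rfl fun d _ =>
        quad_pointwise Y a b c d]
    simp only [Finset.sum_add_distrib, Finset.sum_sub_distrib]
  rw [split, T0_eval, T1_eval, T2_eval, T3_eval, T4_eval, T5_eval, T6_eval]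
  ring

end Aux

/-- (Closed-form identity for the fourth-moment U-statistic.)
For `n ≥ 4` and real numbers `Y_1, …, Y_n`, with `S_l = ∑_{i=1}^n Y_i^l`, the sum
`(1/4) ∑ (Y_i − Y_{i'})² (Y_h − Y_{h'})²` over all ordered quadruples of mutually distinct
indices equals `(n−1)(4 S₃ S₁ − n S₄ − 3 S₂²) + (n S₂ − S₁²)²`; equivalently, the estimator
`ω̂` equals that expression divided by `n(n−1)(n−2)(n−3)`. -/
theorem stmt_16 (n : ℕ) (hn : 4 ≤ n) (Y : ℕ → ℝ) :
    (1 / 4 : ℝ) * quadSum n Y =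
      ((n : ℝ) - 1) * (4 * powSum n Y 3 * powSum n Y 1 - (n : ℝ) * powSum n Y 4
          - 3 * (powSum n Y 2) ^ 2)
        + ((n : ℝ) * powSum n Y 2 - (powSum n Y 1) ^ 2) ^ 2 ∧
    (1 / 4 : ℝ) / ((n : ℝ) * ((n : ℝ) - 1) * ((n : ℝ) - 2) * ((n : ℝ) - 3)) * quadSum n Y =
      (((n : ℝ) - 1) * (4 * powSum n Y 3 * powSum n Y 1 - (n : ℝ) * powSum n Y 4
          - 3 * (powSum n Y 2) ^ 2)
        + ((n : ℝ) * powSum n Y 2 - (powSum n Y 1) ^ 2) ^ 2)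
        / ((n : ℝ) * ((n : ℝ) - 1) * ((n : ℝ) - 2) * ((n : ℝ) - 3)) := by
  have h1 : (1 / 4 : ℝ) * quadSum n Y =
      ((n : ℝ) - 1) * (4 * powSum n Y 3 * powSum n Y 1 - (n : ℝ) * powSum n Y 4
          - 3 * (powSum n Y 2) ^ 2)
        + ((n : ℝ) * powSum n Y 2 - (powSum n Y 1) ^ 2) ^ 2 := by
    rw [quadSum_eval]; ring
  refine ⟨h1, ?_⟩
  rw [show (1 / 4 : ℝ) / ((n : ℝ) * ((n : ℝ) - 1) * ((n : ℝ) - 2) * ((n : ℝ) - 3)) * quadSum n Y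
      = ((1 / 4 : ℝ) * quadSum n Y) / ((n : ℝ) * ((n : ℝ) - 1) * ((n : ℝ) - 2) * ((n : ℝ) - 3))
    from by ring, h1]
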